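/- arXiv:0705.2874 — 3 statements merged into one kernel-verified Lean document; each statement's English description precedes it below -/
import Mathlib

section
/- Let K be a finite abstract simplicial complex, f a discrete Morse function on K, and σ a face of K of dimension p. Then at least one of the two sets {τ > σ : dim τ = p+1, f(τ) ≤ f(σ)} and {ν < σ : dim ν = p−1, f(σ) ≤ f(ν)} is empty. -/
/-- A finite abstract simplicial complex on a vertex type `V`: a finite family of
finite nonempty faces, closed under passing to nonempty subsets. -/
structure FinSimplicialComplex (V : Type) [DecidableEq V] where
  faces : Finset (Finset V)
  nonempty_of_mem : ∀ σ ∈ faces, σ.Nonempty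
  down_closed : ∀ σ ∈ faces, ∀ τ : Finset V, τ ⊆ σ → τ.Nonempty → τ ∈ faces

variable {V : Type} [DecidableEq V]

/-- `f` is a discrete Morse function on `K`: for each face `σ` (of dimension
`p = σ.card - 1`), there is at most one cofacet `τ > σ` of dimension `p+1` with
`f τ ≤ f σ`, and at most one facet `ν < σ` of dimension `p-1` with `f σ ≤ f ν`. -/
def IsDiscreteMorse (K : FinSimplicialComplex V) (f : Finset V → ℝ) : Prop :=
  ∀ σ ∈ K.faces,
    {τ : Finset V | τ ∈ K.faces ∧ σ ⊂ τ ∧ τ.card = σ.card + 1 ∧ f τ ≤ f σ}.ncard ≤ 1 ∧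
    {ν : Finset V | ν ∈ K.faces ∧ ν ⊂ σ ∧ ν.card + 1 = σ.card ∧ f σ ≤ f ν}.ncard ≤ 1

/-! If `ν < σ < τ` with `f τ ≤ f σ ≤ f ν`, the interval `[ν, τ]` contains a second face `σ'`
(add to `ν` the vertex of `τ` missing from `σ`). Either `f τ ≤ f σ'`, and `τ` has two facets
`σ, σ'` of value at least `f τ`, or `f σ' < f τ ≤ f ν`, and `ν` has two cofacets `σ, σ'` of value
at most `f ν`; both contradict the Morse condition. -/

theorem Finset.exists_ne_between_of_subset_of_ssubset {ν σ τ : Finset V} (hνσ : ν ⊆ σ)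
    (hστ : σ ⊂ τ) (hcard : ν.card + 1 < τ.card) :
    ∃ σ', σ' ≠ σ ∧ ν ⊂ σ' ∧ σ' ⊂ τ ∧ σ'.card = ν.card + 1 := by
  obtain ⟨b, hbτ, hbσ⟩ := Finset.exists_of_ssubset hστ
  have hbν : b ∉ ν := fun h => hbσ (hνσ h)
  have hcard' : (insert b ν).card = ν.card + 1 := Finset.card_insert_of_notMem hbν
  have hsub : insert b ν ⊆ τ := Finset.insert_subset hbτ (hνσ.trans hστ.subset)
  refine ⟨insert b ν, fun h => hbσ (h ▸ Finset.mem_insert_self b ν),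
    Finset.ssubset_insert hbν, ?_, hcard'⟩
  exact Finset.ssubset_iff_subset_ne.mpr ⟨hsub, fun h => by rw [h] at hcard'; omega⟩

namespace FinSimplicialComplex

theorem eq_of_ncard_le_one (K : FinSimplicialComplex V) {P : Finset V → Prop}
    (h : {x | x ∈ K.faces ∧ P x}.ncard ≤ 1) {a b : Finset V} (ha : a ∈ K.faces) (hPa : P a)
    (hb : b ∈ K.faces) (hPb : P b) : a = b :=
  (Set.ncard_le_one (K.faces.finite_toSet.subset fun _ hx => hx.1)).mp h a ⟨ha, hPa⟩ b ⟨hb, hPb⟩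

end FinSimplicialComplex

namespace IsDiscreteMorse

variable {K : FinSimplicialComplex V} {f : Finset V → ℝ}

theorem facet_eq (hf : IsDiscreteMorse K f) {τ σ₁ σ₂ : Finset V} (hτ : τ ∈ K.faces)
    (h₁ : σ₁ ∈ K.faces) (hσ₁τ : σ₁ ⊂ τ) (hc₁ : σ₁.card + 1 = τ.card) (hf₁ : f τ ≤ f σ₁)
    (h₂ : σ₂ ∈ K.faces) (hσ₂τ : σ₂ ⊂ τ) (hc₂ : σ₂.card + 1 = τ.card) (hf₂ : f τ ≤ f σ₂) :
    σ₁ = σ₂ :=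
  K.eq_of_ncard_le_one (hf τ hτ).2 h₁ ⟨hσ₁τ, hc₁, hf₁⟩ h₂ ⟨hσ₂τ, hc₂, hf₂⟩

theorem cofacet_eq (hf : IsDiscreteMorse K f) {ν σ₁ σ₂ : Finset V} (hν : ν ∈ K.faces)
    (h₁ : σ₁ ∈ K.faces) (hνσ₁ : ν ⊂ σ₁) (hc₁ : σ₁.card = ν.card + 1) (hf₁ : f σ₁ ≤ f ν)
    (h₂ : σ₂ ∈ K.faces) (hνσ₂ : ν ⊂ σ₂) (hc₂ : σ₂.card = ν.card + 1) (hf₂ : f σ₂ ≤ f ν) :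
    σ₁ = σ₂ :=
  K.eq_of_ncard_le_one (hf ν hν).1 h₁ ⟨hνσ₁, hc₁, hf₁⟩ h₂ ⟨hνσ₂, hc₂, hf₂⟩

end IsDiscreteMorse

/-- For a discrete Morse function, at least one of the two exceptional sets of any
face is empty. -/
theorem discreteMorse_one_side_empty (K : FinSimplicialComplex V) (f : Finset V → ℝ)
    (hf : IsDiscreteMorse K f) (σ : Finset V) (hσ : σ ∈ K.faces) :
    {τ : Finset V | τ ∈ K.faces ∧ σ ⊂ τ ∧ τ.card = σ.card + 1 ∧ f τ ≤ f σ} = ∅ ∨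
    {ν : Finset V | ν ∈ K.faces ∧ ν ⊂ σ ∧ ν.card + 1 = σ.card ∧ f σ ≤ f ν} = ∅ := by
  by_contra! hboth
  obtain ⟨⟨τ, hτ, hστ, hcτ, hfτ⟩, ⟨ν, hν, hνσ, hcν, hfν⟩⟩ := hboth
  obtain ⟨σ', hσ'σ, hνσ', hσ'τ, hcσ'⟩ :=
    Finset.exists_ne_between_of_subset_of_ssubset hνσ.subset hστ (by omega)
  have hσ' : σ' ∈ K.faces :=
    K.down_closed τ hτ σ' hσ'τ.subset (Finset.card_pos.mp (by omega))
  by_cases hfσ' : f τ ≤ f σ'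
  · exact hσ'σ (hf.facet_eq hτ hσ' hσ'τ (by omega) hfσ' hσ hστ (by omega) hfτ)
  · exact hσ'σ (hf.cofacet_eq hν hσ' hνσ' hcσ' (by linarith) hσ hνσ (by omega) hfν)
end

section
/- Let K be a finite abstract simplicial complex. A discrete vector field V on K is the gradient vector field of some discrete Morse function on K if and only if there are no nontrivial closed V-paths. -/
variable {V : Type} [DecidableEq V]

/-- The gradient vector field of a discrete Morse function `f`. -/
def gradField (K : FinSimplicialComplex V) (f : Finset V → ℝ) :
    Set (Finset V × Finset V) :=
  {p | p.1 ∈ K.faces ∧ p.2 ∈ K.faces ∧ p.1 ⊂ p.2 ∧ p.2.card = p.1.card + 1 ∧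
    f p.2 ≤ f p.1}

/-- `W` is a discrete vector field on `K`: a set of pairs `(σ, τ)` of faces with
`σ < τ`, `dim τ = dim σ + 1`, such that each face belongs to at most one pair. -/
def IsDiscreteVectorField (K : FinSimplicialComplex V)
    (W : Set (Finset V × Finset V)) : Prop :=
  (∀ p ∈ W, p.1 ∈ K.faces ∧ p.2 ∈ K.faces ∧ p.1 ⊂ p.2 ∧ p.2.card = p.1.card + 1) ∧
  ∀ p ∈ W, ∀ q ∈ W, ∀ σ : Finset V,
    (σ = p.1 ∨ σ = p.2) → (σ = q.1 ∨ σ = q.2) → p = q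

/-- `W` admits a nontrivial closed `W`-path: a sequence
`σ₀, τ₀, σ₁, τ₁, …, τ_r, σ_{r+1}` with `(σᵢ, τᵢ) ∈ W`, `σ_{i+1} < τᵢ` of
codimension one, `σ_{i+1} ≠ σᵢ`, and `σ₀ = σ_{r+1}`. -/
def HasNontrivialClosedPath (W : Set (Finset V × Finset V)) : Prop :=
  ∃ (r : ℕ) (σ τ : ℕ → Finset V),
    (∀ i ≤ r, (σ i, τ i) ∈ W) ∧
    (∀ i ≤ r, σ (i + 1) ⊂ τ i ∧ (σ (i + 1)).card + 1 = (τ i).card ∧ σ (i + 1) ≠ σ i) ∧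
    σ 0 = σ (r + 1)


/-!
Along a closed `V`-path a gradient field would have to decrease strictly:
`f σᵢ₊₁ < f τᵢ ≤ f σᵢ`, the first inequality because `τᵢ` has at most one facet `ν` with
`f τᵢ ≤ f ν`, and `σᵢ ≠ σᵢ₊₁` are two candidates.

Conversely, if `V` has no closed paths, the relation "`σ'` may follow `σ` in a `V`-path" is
acyclic, so the number `d σ` of faces reachable from `σ` by `V`-paths drops strictly along it.
Writing `b x` for the lower face paired with `x` by `V` (or `x` itself), the function
`f x = (N + 1) * #(b x) + d (b x)`, with `N` the number of faces, is constant on the pairs of `V`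
and strictly increasing along every other facet relation `σ < τ`: either `#(b σ) < #(b τ)`, or
`σ = b σ` and `σ` follows `b τ` in a `V`-path.
-/

open Relation

section SetCard

variable {α : Type*} {R : α → α → Prop} {s : Set α}

lemma Relation.TransGen.mem_of_forall_rel_mem (hRs : ∀ x y, R x y → y ∈ s) {a b : α}
    (h : TransGen R a b) : b ∈ s := by
  obtain ⟨c, -, hcb⟩ := TransGen.tail'_iff.1 h
  exact hRs c b hcb

lemma ncard_setOf_transGen_lt (hs : s.Finite) (hRs : ∀ x y, R x y → y ∈ s)
    (hR : ∀ x, ¬ TransGen R x x) {a b : α} (hab : TransGen R a b) :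
    {x | TransGen R b x}.ncard < {x | TransGen R a x}.ncard := by
  have hfin : {x | TransGen R a x}.Finite :=
    hs.subset fun _ hx => TransGen.mem_of_forall_rel_mem hRs hx
  have hsub : insert b {x | TransGen R b x} ⊆ {x | TransGen R a x} := by
    rintro x (rfl | hx)
    exacts [hab, hab.trans hx]
  have hb : b ∉ {x | TransGen R b x} := hR b
  calc {x | TransGen R b x}.ncard
      < (insert b {x | TransGen R b x}).ncard := by
        rw [Set.ncard_insert_of_notMem hb (hfin.subset fun _ hx => hab.trans hx)]
        exact Nat.lt_succ_self _
    _ ≤ {x | TransGen R a x}.ncard := Set.ncard_le_ncard hsub hfin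

lemma Set.Subsingleton.ncard_le_one (hs : s.Subsingleton) : s.ncard ≤ 1 :=
  (Set.ncard_le_one hs.finite).2 fun _ ha _ hb => hs ha hb

end SetCard

lemma Nat.mul_add_lt_mul_add_of_lex {N a a' d d' : ℕ} (hd : d ≤ N)
    (h : a < a' ∨ a = a' ∧ d < d') : (N + 1) * a + d < (N + 1) * a' + d' := by
  rcases h with h | ⟨rfl, h⟩
  · nlinarith
  · omega

lemma FinSimplicialComplex.card_pos {K : FinSimplicialComplex V} {σ : Finset V}
    (hσ : σ ∈ K.faces) : 0 < σ.card :=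
  Finset.card_pos.2 (K.nonempty_of_mem σ hσ)

lemma FinSimplicialComplex.mem_faces_of_ssubset {K : FinSimplicialComplex V} {σ τ : Finset V}
    (hτ : τ ∈ K.faces) (hστ : σ ⊂ τ) (hσ : 0 < σ.card) : σ ∈ K.faces :=
  K.down_closed τ hτ σ hστ.subset (Finset.card_pos.1 hσ)

def PathStep (W : Set (Finset V × Finset V)) (σ σ' : Finset V) : Prop :=
  ∃ τ, (σ, τ) ∈ W ∧ σ' ⊂ τ ∧ σ'.card + 1 = τ.card ∧ σ' ≠ σ

def IsVPath (W : Set (Finset V × Finset V)) (r : ℕ) (σ τ : ℕ → Finset V) : Prop :=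
  (∀ i ≤ r, (σ i, τ i) ∈ W) ∧
    ∀ i ≤ r, σ (i + 1) ⊂ τ i ∧ (σ (i + 1)).card + 1 = (τ i).card ∧ σ (i + 1) ≠ σ i

omit [DecidableEq V] in
lemma exists_isVPath_iff_transGen {W : Set (Finset V × Finset V)} {x y : Finset V} :
    (∃ r σ τ, IsVPath W r σ τ ∧ σ 0 = x ∧ σ (r + 1) = y) ↔ TransGen (PathStep W) x y := by
  constructor
  · rintro ⟨r, σ, τ, ⟨hW, hstep⟩, rfl, rfl⟩
    have key : ∀ k ≤ r, TransGen (PathStep W) (σ 0) (σ (k + 1)) := by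
      intro k hk
      induction k with
      | zero => exact .single ⟨τ 0, hW 0 hk, hstep 0 hk⟩
      | succ k ih => exact (ih (by omega)).tail ⟨τ (k + 1), hW _ hk, hstep _ hk⟩
    exact key r le_rfl
  · intro h
    induction h with
    | single h =>
      obtain ⟨τ₀, hmem, hstep⟩ := h
      refine ⟨0, fun i => if i = 0 then x else _, fun _ => τ₀, ⟨?_, ?_⟩, rfl, rfl⟩ <;>
        intro i hi <;> obtain rfl : i = 0 := by omega
      exacts [hmem, hstep]
    | @tail y z _ hyz ih =>
      obtain ⟨r, σ, τ, ⟨hW, hstep⟩, h0, hr⟩ := ih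
      obtain ⟨τ', hmem, hstep'⟩ := hyz
      refine ⟨r + 1, Function.update σ (r + 2) z, Function.update τ (r + 1) τ',
        ⟨fun i hi => ?_, fun i hi => ?_⟩, by simpa using h0, by simp⟩
      · rcases Nat.lt_or_eq_of_le hi with hi' | rfl
        · simpa [Function.update_of_ne (show i ≠ r + 2 by omega),
            Function.update_of_ne (show i ≠ r + 1 by omega)] using hW i (by omega)
        · simpa [hr] using hmem
      · rcases Nat.lt_or_eq_of_le hi with hi' | rfl
        · simpa [Function.update_of_ne (show i + 1 ≠ r + 2 by omega),
            Function.update_of_ne (show i ≠ r + 2 by omega),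
            Function.update_of_ne (show i ≠ r + 1 by omega)] using hstep i (by omega)
        · simpa [hr] using hstep'

omit [DecidableEq V] in
lemma hasNontrivialClosedPath_iff {W : Set (Finset V × Finset V)} :
    HasNontrivialClosedPath W ↔ ∃ σ, TransGen (PathStep W) σ σ := by
  constructor
  · rintro ⟨r, σ, τ, hW, hstep, hclosed⟩
    exact ⟨σ 0, exists_isVPath_iff_transGen.1 ⟨r, σ, τ, ⟨hW, hstep⟩, rfl, hclosed.symm⟩⟩
  · rintro ⟨x, hx⟩
    obtain ⟨r, σ, τ, ⟨hW, hstep⟩, h0, hr⟩ := exists_isVPath_iff_transGen.2 hx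
    exact ⟨r, σ, τ, hW, hstep, h0.trans hr.symm⟩

lemma IsDiscreteMorse.lt_of_pathStep {K : FinSimplicialComplex V} {f : Finset V → ℝ}
    (hf : IsDiscreteMorse K f) {σ σ' : Finset V} (h : PathStep (gradField K f) σ σ') :
    f σ' < f σ := by
  obtain ⟨τ, ⟨hσ, hτ, hστ, hcard, hle⟩, hσ'τ, hcard', hne⟩ := h
  have hcard : τ.card = σ.card + 1 := hcard
  have hσ' : σ' ∈ K.faces :=
    K.mem_faces_of_ssubset hτ hσ'τ (by have := K.card_pos (σ := σ) hσ; omega)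
  have hlt : f σ' < f τ := by
    by_contra! hge
    have hfin : {ν | ν ∈ K.faces ∧ ν ⊂ τ ∧ ν.card + 1 = τ.card ∧ f τ ≤ f ν}.Finite :=
      K.faces.finite_toSet.subset fun _ hν => hν.1
    exact hne ((Set.ncard_le_one hfin).1 (hf τ hτ).2 σ' ⟨hσ', hσ'τ, hcard', hge⟩
      σ ⟨hσ, hστ, hcard.symm, hle⟩)
  exact hlt.trans_le hle

lemma IsDiscreteMorse.not_hasNontrivialClosedPath {K : FinSimplicialComplex V}
    {f : Finset V → ℝ} (hf : IsDiscreteMorse K f) :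
    ¬ HasNontrivialClosedPath (gradField K f) := by
  suffices ∀ {x y}, TransGen (PathStep (gradField K f)) x y → f y < f x by
    rw [hasNontrivialClosedPath_iff]
    exact fun ⟨σ, hσ⟩ => (this hσ).false
  intro x y h
  induction h with
  | single h => exact hf.lt_of_pathStep h
  | tail _ h ih => exact (hf.lt_of_pathStep h).trans ih

open Classical in
noncomputable def baseFace (W : Set (Finset V × Finset V)) (x : Finset V) : Finset V :=
  if h : ∃ σ, (σ, x) ∈ W then h.choose else x

omit [DecidableEq V] in
lemma baseFace_eq_or_mem (W : Set (Finset V × Finset V)) (x : Finset V) :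
    baseFace W x = x ∨ (baseFace W x, x) ∈ W := by
  unfold baseFace
  split_ifs with h
  exacts [.inr h.choose_spec, .inl rfl]

noncomputable def pathDepth (W : Set (Finset V × Finset V)) (σ : Finset V) : ℕ :=
  {x | TransGen (PathStep W) σ x}.ncard

noncomputable def morseValue (K : FinSimplicialComplex V) (W : Set (Finset V × Finset V))
    (x : Finset V) : ℕ :=
  (K.faces.card + 1) * (baseFace W x).card + pathDepth W (baseFace W x)

namespace IsDiscreteVectorField

variable {K : FinSimplicialComplex V} {W : Set (Finset V × Finset V)}
  (hW : IsDiscreteVectorField K W)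
include hW

lemma card_eq_of_mem {σ τ : Finset V} (h : (σ, τ) ∈ W) : τ.card = σ.card + 1 :=
  (hW.1 _ h).2.2.2

lemma subsingleton_upper (σ : Finset V) : {τ | (σ, τ) ∈ W}.Subsingleton :=
  fun _ h₁ _ h₂ => congrArg Prod.snd (hW.2 _ h₁ _ h₂ σ (.inl rfl) (.inl rfl))

lemma subsingleton_lower (τ : Finset V) : {σ | (σ, τ) ∈ W}.Subsingleton :=
  fun _ h₁ _ h₂ => congrArg Prod.fst (hW.2 _ h₁ _ h₂ τ (.inr rfl) (.inr rfl))

section LeIff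

variable {f : Finset V → ℝ} (hf : ∀ σ ∈ K.faces, ∀ τ ∈ K.faces, σ ⊂ τ →
  τ.card = σ.card + 1 → (f τ ≤ f σ ↔ (σ, τ) ∈ W))
include hf

lemma isDiscreteMorse_of_le_iff : IsDiscreteMorse K f := fun σ hσ =>
  ⟨((hW.subsingleton_upper σ).anti fun τ hτ =>
      (hf σ hσ τ hτ.1 hτ.2.1 hτ.2.2.1).1 hτ.2.2.2).ncard_le_one,
    ((hW.subsingleton_lower σ).anti fun ν hν =>
      (hf ν hν.1 σ hσ hν.2.1 hν.2.2.1.symm).1 hν.2.2.2).ncard_le_one⟩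

lemma gradField_eq_of_le_iff : gradField K f = W := by
  ext ⟨σ, τ⟩
  constructor
  · rintro ⟨hσ, hτ, hστ, hcard, hle⟩
    exact (hf σ hσ τ hτ hστ hcard).1 hle
  · intro h
    obtain ⟨hσ, hτ, hστ, hcard⟩ := hW.1 _ h
    exact ⟨hσ, hτ, hστ, hcard, (hf σ hσ τ hτ hστ hcard).2 h⟩

end LeIff

lemma baseFace_eq_of_mem {σ τ : Finset V} (h : (σ, τ) ∈ W) : baseFace W τ = σ := by
  rw [baseFace, dif_pos ⟨σ, h⟩]
  exact hW.subsingleton_lower τ (Exists.choose_spec _) h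

lemma baseFace_eq_self_of_mem {σ τ : Finset V} (h : (σ, τ) ∈ W) : baseFace W σ = σ := by
  refine (baseFace_eq_or_mem W σ).resolve_right fun hb => ?_
  have hστ : σ = τ := congrArg Prod.snd (hW.2 _ hb _ h σ (.inr rfl) (.inl rfl))
  exact (hW.1 _ h).2.2.1.ne hστ

lemma pathStep_mem_faces {σ σ' : Finset V} (h : PathStep W σ σ') : σ' ∈ K.faces := by
  obtain ⟨τ, hστ, hσ'τ, hcard, -⟩ := h
  obtain ⟨hσ, hτ, -⟩ := hW.1 _ hστ
  have := hW.card_eq_of_mem hστ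
  exact K.mem_faces_of_ssubset hτ hσ'τ (by have := K.card_pos (σ := σ) hσ; omega)

lemma pathDepth_le (σ : Finset V) : pathDepth W σ ≤ K.faces.card := by
  rw [← Set.ncard_coe_finset]
  exact Set.ncard_le_ncard (fun _ hx => TransGen.mem_of_forall_rel_mem
    (fun _ _ h => hW.pathStep_mem_faces h) hx) K.faces.finite_toSet

lemma pathDepth_lt (hNC : ¬ HasNontrivialClosedPath W) {σ σ' : Finset V}
    (h : PathStep W σ σ') : pathDepth W σ' < pathDepth W σ :=
  ncard_setOf_transGen_lt K.faces.finite_toSet (fun _ _ h => hW.pathStep_mem_faces h)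
    (fun x hx => hNC (hasNontrivialClosedPath_iff.2 ⟨x, hx⟩)) (.single h)

lemma morseValue_lt (hNC : ¬ HasNontrivialClosedPath W) {σ τ : Finset V} (hστ : σ ⊂ τ)
    (hcard : τ.card = σ.card + 1) (hnot : (σ, τ) ∉ W) :
    morseValue K W σ < morseValue K W τ := by
  refine Nat.mul_add_lt_mul_add_of_lex (hW.pathDepth_le _) ?_
  rcases baseFace_eq_or_mem W σ with hσb | hσb <;>
    rcases baseFace_eq_or_mem W τ with hτb | hτb
  · left; rw [hσb, hτb]; omega
  · have hb := hW.card_eq_of_mem hτb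
    have hstep : PathStep W (baseFace W τ) σ :=
      ⟨τ, hτb, hστ, hcard.symm, fun h => hnot (h ▸ hτb)⟩
    right
    rw [hσb]
    exact ⟨by omega, hW.pathDepth_lt hNC hstep⟩
  · left; have := hW.card_eq_of_mem hσb; rw [hτb]; omega
  · left; have := hW.card_eq_of_mem hσb; have := hW.card_eq_of_mem hτb; omega

lemma morseValue_le_iff (hNC : ¬ HasNontrivialClosedPath W) {σ τ : Finset V} (hστ : σ ⊂ τ)
    (hcard : τ.card = σ.card + 1) :
    (morseValue K W τ : ℝ) ≤ morseValue K W σ ↔ (σ, τ) ∈ W := by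
  rw [Nat.cast_le]
  refine ⟨fun hle => ?_, fun h => ?_⟩
  · by_contra hnot
    exact (hW.morseValue_lt hNC hστ hcard hnot).not_ge hle
  · rw [morseValue, morseValue, hW.baseFace_eq_of_mem h, hW.baseFace_eq_self_of_mem h]

end IsDiscreteVectorField

/-- A discrete vector field is the gradient vector field of a discrete Morse
function if and only if it has no nontrivial closed paths. -/
theorem gradField_iff_no_closed_path (K : FinSimplicialComplex V)
    (W : Set (Finset V × Finset V)) (hW : IsDiscreteVectorField K W) :
    (∃ f : Finset V → ℝ, IsDiscreteMorse K f ∧ W = gradField K f) ↔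
      ¬ HasNontrivialClosedPath W := by
  refine ⟨fun ⟨f, hf, hWf⟩ => hWf ▸ hf.not_hasNontrivialClosedPath, fun hNC => ?_⟩
  have hle : ∀ σ ∈ K.faces, ∀ τ ∈ K.faces, σ ⊂ τ → τ.card = σ.card + 1 →
      ((morseValue K W τ : ℝ) ≤ morseValue K W σ ↔ (σ, τ) ∈ W) :=
    fun _ _ _ _ hστ hcard => hW.morseValue_le_iff hNC hστ hcard
  exact ⟨_, hW.isDiscreteMorse_of_le_iff hle, (hW.gradField_eq_of_le_iff hle).symm⟩
end

section
/- Let A be a central essential hyperplane arrangement in ℝ^n. Then for every chamber C of A and every unit vector v ∈ C, there exists an orthonormal basis e_1, …, e_n of ℝ^n which is generic with respect to A and satisfies e_1 = v. In particular, orthonormal bases generic with respect to A exist. -/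
open Submodule Module
open scoped InnerProductSpace

noncomputable section

abbrev E (n : ℕ) := EuclideanSpace ℝ (Fin n)

/-- The complement of the union of the hyperplanes `ker ⟪α, ·⟫`, `α ∈ A`. -/
def hypComp (n : ℕ) (A : Finset (E n)) : Set (E n) :=
  {x | ∀ α ∈ A, ⟪α, x⟫_ℝ ≠ 0}

/-- A chamber of the central arrangement with normals `A`: a connected component
of the complement of the union of the hyperplanes. -/
def IsChamber (n : ℕ) (A : Finset (E n)) (C : Set (E n)) : Prop :=
  ∃ x ∈ hypComp n A, C = connectedComponentIn (hypComp n A) x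

/-- `V_i = span(e_1, …, e_i)` for a frame `b` (here `e_j = b (j-1)`). -/
def flagSub (n : ℕ) (b : Fin n → E n) (i : ℕ) : Submodule ℝ (E n) :=
  Submodule.span ℝ (b '' {j : Fin n | (j : ℕ) < i})

/-- The intersection `⋂_{α ∈ S} ker ⟪α, ·⟫` of a subfamily of the hyperplanes;
these are the elements of the intersection lattice `L(A)` for `S ⊆ A`. -/
def interSub (n : ℕ) (S : Finset (E n)) : Submodule ℝ (E n) :=
  ⨅ α ∈ S, (ℝ ∙ α)ᗮ

/-- A frame `b` is generic with respect to the central arrangement with normals `A`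
if each `V_i` meets each element `L ∈ L(A)` transversally:
`dim (V_i ∩ L) = max (0, i - codim L)` (truncated subtraction on `ℕ`). -/
def IsGenericFrame (n : ℕ) (A : Finset (E n)) (b : Fin n → E n) : Prop :=
  ∀ i : ℕ, 1 ≤ i → i ≤ n → ∀ S : Finset (E n), S ⊆ A →
    finrank ℝ ↥(flagSub n b i ⊓ interSub n S)
      = i - (n - finrank ℝ ↥(interSub n S))

/-!
The frame is built one vector at a time. If `V = span (e₁, …, eᵢ)` meets every `L ∈ L(A)`
transversally, so does `V ⊔ ℝ ∙ u` as soon as `u ∉ V` and `u ∉ V ⊔ L` for each `L` with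
`dim V < codim L`; for the other `L` one already has `V ⊔ L = ⊤`. These finitely many proper
subspaces all contain `V`, so the component in `Vᗮ` of a vector avoiding all of them (a real
vector space is not a finite union of proper subspaces), normalized, is an admissible next
vector. A unit vector of a chamber lies in no hyperplane, hence in no proper `L ∈ L(A)`, so it
is an admissible first vector.
-/

section Transversality

variable {K M : Type*} [Field K] [AddCommGroup M] [Module K M]

/-- `V ⊓ L` has the least dimension possible, `max 0 (dim V - codim L)`. -/
def IsTransversal (V L : Submodule K M) : Prop :=
  finrank K ↥(V ⊓ L) = finrank K V - (finrank K M - finrank K L)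

variable (K) in
def frameFlag {m : ℕ} (w : Fin m → M) (k : ℕ) : Submodule K M :=
  span K (w '' {j | (j : ℕ) < k})

def IsTransversalFrame {ι : Type*} (L : ι → Submodule K M) {m : ℕ} (w : Fin m → M) : Prop :=
  ∀ k ≤ m, ∀ j, IsTransversal (frameFlag K w k) (L j)

theorem IsTransversal.sup_span_singleton [Module.Finite K M] {V L : Submodule K M}
    (hVL : IsTransversal V L) {u : M} (hu : u ∉ V)
    (hgap : finrank K V < finrank K M - finrank K L → u ∉ V ⊔ L) :
    IsTransversal (V ⊔ K ∙ u) L := by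
  unfold IsTransversal at hVL ⊢
  have hdim := finrank_sup_add_finrank_inf_eq V L
  have hdim' := finrank_sup_add_finrank_inf_eq (V ⊔ K ∙ u) L
  have hV' := finrank_sup_span_singleton hu
  have hmono := finrank_mono (sup_le_sup_right le_sup_left L : V ⊔ L ≤ V ⊔ K ∙ u ⊔ L)
  have hL := finrank_le L
  have htop := finrank_le (V ⊔ K ∙ u ⊔ L)
  by_cases hc : finrank K V < finrank K M - finrank K L
  · have hsup : finrank K ↥(V ⊔ K ∙ u ⊔ L) = finrank K ↥(V ⊔ L) + 1 := by
      rw [sup_right_comm]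
      exact finrank_sup_span_singleton (hgap hc)
    omega
  · omega

theorem frameFlag_of_le {m k : ℕ} (w : Fin m → M) (hk : k ≤ m) :
    frameFlag K w k = span K (Set.range (w ∘ Fin.castLE hk)) := by
  rw [Set.range_comp, Fin.range_castLE]
  rfl

theorem frameFlag_self {m : ℕ} (w : Fin m → M) : frameFlag K w m = span K (Set.range w) := by
  rw [frameFlag_of_le w le_rfl, Fin.castLE_rfl, Function.comp_id]

theorem LinearIndependent.finrank_frameFlag {m k : ℕ} {w : Fin m → M}
    (hw : LinearIndependent K w) (hk : k ≤ m) : finrank K (frameFlag K w k) = k := by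
  rw [frameFlag_of_le w hk, finrank_span_eq_card (hw.comp _ (Fin.castLE_injective hk)),
    Fintype.card_fin]

theorem frameFlag_snoc_of_le {m k : ℕ} (w : Fin m → M) (u : M) (hk : k ≤ m) :
    frameFlag K (Fin.snoc w u : Fin (m + 1) → M) k = frameFlag K w k := by
  rw [frameFlag_of_le w hk, frameFlag_of_le _ (hk.trans m.le_succ)]
  congr 2
  funext j
  exact Fin.snoc_castSucc (α := fun _ => M) (i := Fin.castLE hk j) ..

theorem frameFlag_snoc_self {m : ℕ} (w : Fin m → M) (u : M) :
    frameFlag K (Fin.snoc w u : Fin (m + 1) → M) (m + 1) = frameFlag K w m ⊔ K ∙ u := by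
  rw [frameFlag_self, frameFlag_self, Fin.range_snoc, span_insert, sup_comm]

theorem frameFlag_zero {m : ℕ} (w : Fin m → M) : frameFlag K w 0 = ⊥ := by
  have hempty : {j : Fin m | (j : ℕ) < 0} = ∅ :=
    Set.eq_empty_of_forall_notMem fun j => j.val.not_lt_zero
  rw [frameFlag, hempty, Set.image_empty, span_empty]

theorem isTransversalFrame_of_isEmpty {ι : Type*} (L : ι → Submodule K M) (w : Fin 0 → M) :
    IsTransversalFrame L w := by
  intro k hk j
  obtain rfl := Nat.le_zero.mp hk
  rw [IsTransversal, frameFlag_zero, bot_inf_eq, finrank_bot, Nat.zero_sub]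

theorem IsTransversalFrame.snoc [Module.Finite K M] {ι : Type*} {L : ι → Submodule K M} {m : ℕ}
    {w : Fin m → M} (hw : IsTransversalFrame L w) {u : M} (hu : u ∉ frameFlag K w m)
    (hgap : ∀ j, finrank K (frameFlag K w m) < finrank K M - finrank K (L j) →
      u ∉ frameFlag K w m ⊔ L j) :
    IsTransversalFrame L (Fin.snoc w u : Fin (m + 1) → M) := by
  intro k hk j
  rcases Nat.lt_or_eq_of_le hk with hk | rfl
  · rw [frameFlag_snoc_of_le w u (Nat.lt_succ_iff.mp hk)]
    exact hw k (Nat.lt_succ_iff.mp hk) j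
  · rw [frameFlag_snoc_self]
    exact (hw m le_rfl j).sup_span_singleton hu (hgap j)

theorem isTransversalFrame_const [Module.Finite K M] {ι : Type*} (L : ι → Submodule K M) {v : M}
    (hv : v ≠ 0) (hvL : ∀ j, L j ≠ ⊤ → v ∉ L j) : IsTransversalFrame L (fun _ : Fin 1 => v) := by
  have hsnoc : (fun _ : Fin 1 => v) = Fin.snoc (Fin.elim0 : Fin 0 → M) v :=
    funext fun j => by rw [Subsingleton.elim j (Fin.last 0), Fin.snoc_last]
  rw [hsnoc]
  refine (isTransversalFrame_of_isEmpty L _).snoc (by rwa [frameFlag_zero, mem_bot]) fun j hj => ?_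
  rw [frameFlag_zero, finrank_bot] at hj
  rw [frameFlag_zero, bot_sup_eq]
  exact hvL j fun h => by rw [h, finrank_top] at hj; omega

end Transversality

theorem exists_forall_notMem_of_ne_top {k V ι : Type*} [DivisionRing k] [Infinite k]
    [AddCommGroup V] [Module k V] [Finite ι] (p : ι → Submodule k V) (hp : ∀ i, p i ≠ ⊤) :
    ∃ x, ∀ i, x ∉ p i := by
  by_contra! h
  obtain ⟨i, hi⟩ := Subspace.exists_eq_top_of_iUnion_eq_univ (p := p)
    (Set.iUnion_eq_univ_iff.mpr h)
  exact hp i hi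

section Orthonormal

variable {𝕜 F : Type*} [RCLike 𝕜] [NormedAddCommGroup F] [InnerProductSpace 𝕜 F]

theorem Orthonormal.snoc {m : ℕ} {w : Fin m → F} (hw : Orthonormal 𝕜 w) {u : F} (hu : ‖u‖ = 1)
    (huw : ∀ j, ⟪u, w j⟫_𝕜 = 0) : Orthonormal 𝕜 (Fin.snoc w u : Fin (m + 1) → F) := by
  rw [Fin.snoc_eq_cons_rotate]
  exact (orthonormal_vecCons_iff.mpr ⟨hu, huw, hw⟩).comp _ (finRotate _).injective

variable [FiniteDimensional 𝕜 F]

theorem exists_norm_eq_one_mem_orthogonal_forall_notMem {V : Submodule 𝕜 F} (hV : V ≠ ⊤)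
    {ι : Type*} [Finite ι] (p : ι → Submodule 𝕜 F) (hVp : ∀ i, V ≤ p i) (hp : ∀ i, p i ≠ ⊤) :
    ∃ u, ‖u‖ = 1 ∧ u ∈ Vᗮ ∧ u ∉ V ∧ ∀ i, u ∉ p i := by
  obtain ⟨x, hx⟩ := exists_forall_notMem_of_ne_top (Option.elim · V p)
    (by rintro (_ | i); exacts [hV, hp i])
  obtain ⟨y, hyV, z, hz, rfl⟩ := V.exists_add_mem_mem_orthogonal x
  have hzq : ∀ q : Submodule 𝕜 F, V ≤ q → y + z ∉ q → z ∉ q :=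
    fun q hVq hyz hzq' => hyz (q.add_mem (hVq hyV) hzq')
  have hzV : z ∉ V := hzq V le_rfl (hx none)
  have hz0 : z ≠ 0 := fun h => hzV (h ▸ V.zero_mem)
  have hc : (‖z‖⁻¹ : 𝕜) ≠ 0 := by simpa using hz0
  refine ⟨(‖z‖⁻¹ : 𝕜) • z, norm_smul_inv_norm hz0, Vᗮ.smul_mem _ hz, ?_, fun i => ?_⟩
  · rwa [V.smul_mem_iff hc]
  · rw [(p i).smul_mem_iff hc]
    exact hzq (p i) (hVp i) (hx (some i))

theorem IsTransversalFrame.exists_snoc {ι : Type*} [Finite ι] {L : ι → Submodule 𝕜 F} {m : ℕ}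
    {w : Fin m → F} (hwL : IsTransversalFrame L w) (hw : Orthonormal 𝕜 w)
    (hm : m < finrank 𝕜 F) :
    ∃ u, IsTransversalFrame L (Fin.snoc w u : Fin (m + 1) → F) ∧
      Orthonormal 𝕜 (Fin.snoc w u : Fin (m + 1) → F) := by
  set V := frameFlag 𝕜 w m
  have hV : finrank 𝕜 V = m := hw.linearIndependent.finrank_frameFlag le_rfl
  have hVtop : V ≠ ⊤ := fun h => by rw [h, finrank_top] at hV; omega
  have hVLtop (j : {j // finrank 𝕜 V < finrank 𝕜 F - finrank 𝕜 (L j)}) : V ⊔ L j ≠ ⊤ := by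
    intro h
    have hdim := finrank_sup_add_finrank_inf_eq V (L j)
    rw [h, finrank_top] at hdim
    have hj := j.2
    omega
  obtain ⟨u, hu1, huVperp, huV, hu⟩ :=
    exists_norm_eq_one_mem_orthogonal_forall_notMem hVtop _ (fun _ => le_sup_left) hVLtop
  refine ⟨u, hwL.snoc huV fun j hj => hu ⟨j, hj⟩, hw.snoc hu1 fun j => ?_⟩
  have hwj : w j ∈ V := subset_span ⟨j, j.isLt, rfl⟩
  exact inner_left_of_mem_orthogonal hwj huVperp

theorem IsTransversalFrame.exists_extension {ι : Type*} [Finite ι] {L : ι → Submodule 𝕜 F}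
    {m n : ℕ} {w : Fin m → F} (hwL : IsTransversalFrame L w) (hw : Orthonormal 𝕜 w)
    (hn : finrank 𝕜 F = n) (hmn : m ≤ n) :
    ∃ b : Fin n → F, IsTransversalFrame L b ∧ Orthonormal 𝕜 b ∧
      ∀ j, b (Fin.castLE hmn j) = w j := by
  induction hmn using Nat.decreasingInduction with
  | self => exact ⟨w, hwL, hw, fun j => rfl⟩
  | of_succ k hk ih =>
    obtain ⟨u, huL, hu⟩ := hwL.exists_snoc hw (hn ▸ hk)
    obtain ⟨b, hbL, hb, hbw⟩ := ih huL hu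
    exact ⟨b, hbL, hb, fun j => (hbw j.castSucc).trans (Fin.snoc_castSucc ..)⟩

theorem IsTransversalFrame.exists_orthonormalBasis {ι : Type*} [Finite ι]
    {L : ι → Submodule 𝕜 F} {m n : ℕ} {w : Fin m → F} (hwL : IsTransversalFrame L w)
    (hw : Orthonormal 𝕜 w) (hn : finrank 𝕜 F = n) (hmn : m ≤ n) :
    ∃ b : OrthonormalBasis (Fin n) 𝕜 F, IsTransversalFrame L b ∧
      ∀ j, b (Fin.castLE hmn j) = w j := by
  obtain ⟨b, hbL, hb, hbw⟩ := hwL.exists_extension hw hn hmn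
  have hspan := hb.linearIndependent.span_eq_top_of_card_eq_finrank' (by simp [hn])
  exact ⟨OrthonormalBasis.mk hb hspan.ge, by rwa [OrthonormalBasis.coe_mk], by
    simpa [OrthonormalBasis.coe_mk] using hbw⟩

end Orthonormal

theorem notMem_interSub_of_mem_hypComp {n : ℕ} {A S : Finset (E n)} {v : E n}
    (hv : v ∈ hypComp n A) (hSA : S ⊆ A) (hS : interSub n S ≠ ⊤) : v ∉ interSub n S := by
  obtain ⟨α, hα⟩ : S.Nonempty :=
    Finset.nonempty_iff_ne_empty.mpr fun h => hS (by simp [interSub, h])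
  intro hvS
  have hvα : v ∈ (ℝ ∙ α)ᗮ := (iInf₂_le α hα : interSub n S ≤ _) hvS
  exact hv α (hSA hα) (mem_orthogonal_singleton_iff_inner_right.mp hvα)

theorem IsTransversalFrame.isGenericFrame {n : ℕ} {A : Finset (E n)}
    {b : OrthonormalBasis (Fin n) ℝ (E n)}
    (hb : IsTransversalFrame (fun S : A.powerset => interSub n S) b) : IsGenericFrame n A b := by
  intro i _ hi S hS
  have hbS := hb i hi ⟨S, Finset.mem_powerset.mpr hS⟩
  rwa [IsTransversal, b.orthonormal.linearIndependent.finrank_frameFlag hi,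
    finrank_euclideanSpace_fin] at hbS

theorem exists_generic_frame_general (n : ℕ) (hn : 0 < n) (A : Finset (E n)) :
    (∀ C : Set (E n), IsChamber n A C → ∀ v ∈ C, ‖v‖ = 1 →
      ∃ b : OrthonormalBasis (Fin n) ℝ (E n),
        IsGenericFrame n A ⇑b ∧ b ⟨0, hn⟩ = v) ∧
    ∃ b : OrthonormalBasis (Fin n) ℝ (E n), IsGenericFrame n A ⇑b := by
  have hrank : finrank ℝ (E n) = n := finrank_euclideanSpace_fin
  let L : A.powerset → Submodule ℝ (E n) := fun S => interSub n S
  refine ⟨?_, ?_⟩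
  · rintro C ⟨x, -, rfl⟩ v hvC hv
    have hvA := connectedComponentIn_subset _ _ hvC
    have hvL : ∀ S, L S ≠ ⊤ → v ∉ L S := fun S =>
      notMem_interSub_of_mem_hypComp hvA (Finset.mem_powerset.mp S.2)
    have hv0 : v ≠ 0 := norm_ne_zero_iff.mp (by rw [hv]; exact one_ne_zero)
    obtain ⟨b, hb, hbv⟩ := (isTransversalFrame_const L hv0 hvL).exists_orthonormalBasis
      (orthonormal_subsingleton_iff.mpr fun _ => hv) hrank hn
    exact ⟨b, hb.isGenericFrame, hbv 0⟩
  · obtain ⟨b, hb, -⟩ := (isTransversalFrame_of_isEmpty L Fin.elim0).exists_orthonormalBasis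
      (Orthonormal.of_isEmpty _) hrank n.zero_le
    exact ⟨b, hb.isGenericFrame⟩

/-- For a central essential arrangement, every unit vector `v` in a chamber is the
first vector of some generic orthonormal frame; in particular generic orthonormal
frames exist. -/
theorem exists_generic_frame (n : ℕ) (hn : 0 < n) (A : Finset (E n))
    (h0 : (0 : E n) ∉ A) (hess : interSub n A = ⊥) :
    (∀ C : Set (E n), IsChamber n A C → ∀ v ∈ C, ‖v‖ = 1 →
      ∃ b : OrthonormalBasis (Fin n) ℝ (E n),
        IsGenericFrame n A ⇑b ∧ b ⟨0, hn⟩ = v) ∧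
    ∃ b : OrthonormalBasis (Fin n) ℝ (E n), IsGenericFrame n A ⇑b :=
  exists_generic_frame_general n hn A
end
end
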